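/- Let N ≥ 2 observations be partitioned into m tie groups of sizes t_1,…,t_m with ∑_g t_g = N, let a_1,…,a_N be the corresponding midrank scores, and let σ be a uniformly random permutation of {1,…,N}. Then for any two distinct indices j ≠ j′, Cov(a_{σ(j)}, a_{σ(j′)}) = −(N+1)/12 + (∑_{g=1}^m (t_g³ − t_g)) / (12 N (N−1)); that is, compared with untied ranks, the covariance is increased by (∑_g (t_g³ − t_g))/(12 N (N−1)). -/

import Mathlib

open Finset

/-- Expectation of a real-valued statistic of a uniformly random permutation of `{1,…,N}`. -/
noncomputable def permE (N : ℕ) (X : Equiv.Perm (Fin N) → ℝ) : ℝ :=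
  (∑ σ : Equiv.Perm (Fin N), X σ) / (Fintype.card (Equiv.Perm (Fin N)) : ℝ)

/-- Covariance under a uniformly random permutation. -/
noncomputable def permCov (N : ℕ) (X Y : Equiv.Perm (Fin N) → ℝ) : ℝ :=
  permE N (fun σ => (X σ - permE N X) * (Y σ - permE N Y))

lemma pair_fiber_eq (N : ℕ) (j j' : Fin N) (i i' k k' : Fin N)
    (hii' : i ≠ i') (hkk' : k ≠ k') :
    (univ.filter (fun σ : Equiv.Perm (Fin N) => σ j = i ∧ σ j' = i')).card
      = (univ.filter (fun σ : Equiv.Perm (Fin N) => σ j = k ∧ σ j' = k')).card := by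
  set τ : Equiv.Perm (Fin N) := Equiv.swap (Equiv.swap i k i') k' * Equiv.swap i k with hτ
  have hτi : τ i = k := by
    simp only [hτ, Equiv.Perm.mul_apply, Equiv.swap_apply_left]
    apply Equiv.swap_apply_of_ne_of_ne
    · rcases eq_or_ne i' k with h | h
      · simp [h]; exact fun hh => hii' (hh ▸ h.symm ▸ rfl)
      · rw [Equiv.swap_apply_of_ne_of_ne hii'.symm h]; exact fun hh => h (by exact hh ▸ rfl)
    · exact hkk'
  have hτi' : τ i' = k' := by
    simp only [hτ, Equiv.Perm.mul_apply, Equiv.swap_apply_left]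
  apply Finset.card_bij (fun σ _ => τ * σ)
  · intro σ hσ
    simp only [mem_filter, mem_univ, true_and] at hσ ⊢
    simp [Equiv.Perm.mul_apply, hσ.1, hσ.2, hτi, hτi']
  · intro σ1 h1 σ2 h2 h
    exact mul_left_cancel h
  · intro σ hσ
    simp only [mem_filter, mem_univ, true_and] at hσ
    refine ⟨τ⁻¹ * σ, ?_, by group⟩
    simp only [mem_filter, mem_univ, true_and, Equiv.Perm.mul_apply]
    constructor
    · rw [hσ.1, ← hτi, Equiv.Perm.inv_def, Equiv.symm_apply_apply]
    · rw [hσ.2, ← hτi', Equiv.Perm.inv_def, Equiv.symm_apply_apply]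

lemma single_fiber_eq (N : ℕ) (j : Fin N) (i k : Fin N) :
    (univ.filter (fun σ : Equiv.Perm (Fin N) => σ j = i)).card
      = (univ.filter (fun σ : Equiv.Perm (Fin N) => σ j = k)).card := by
  apply Finset.card_bij (fun σ _ => Equiv.swap i k * σ)
  · intro σ hσ
    simp only [mem_filter, mem_univ, true_and] at hσ ⊢
    simp [Equiv.Perm.mul_apply, hσ]
  · intro σ1 h1 σ2 h2 h
    exact mul_left_cancel h
  · intro σ hσ
    simp only [mem_filter, mem_univ, true_and] at hσ
    refine ⟨(Equiv.swap i k)⁻¹ * σ, ?_, by group⟩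
    simp [Equiv.Perm.mul_apply, hσ]

lemma sum_single (N : ℕ) (j : Fin N) (a : Fin N → ℝ) :
    ∑ σ : Equiv.Perm (Fin N), a (σ j)
      = ((univ.filter (fun σ : Equiv.Perm (Fin N) => σ j = j)).card : ℝ) * ∑ i, a i := by
  rw [← Finset.sum_fiberwise_of_maps_to (g := fun σ : Equiv.Perm (Fin N) => σ j)
    (fun σ _ => mem_univ _) (fun σ => a (σ j))]
  rw [Finset.mul_sum]
  apply Finset.sum_congr rfl
  intro i _
  rw [Finset.sum_congr rfl (fun σ hσ => by
    simp only [mem_filter, mem_univ, true_and] at hσ; rw [hσ]),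
    Finset.sum_const, nsmul_eq_mul, single_fiber_eq N j j i]

lemma card_single (N : ℕ) (j : Fin N) :
    (univ.filter (fun σ : Equiv.Perm (Fin N) => σ j = j)).card * N = N.factorial := by
  have h := Finset.card_eq_sum_card_fiberwise (f := fun σ : Equiv.Perm (Fin N) => σ j)
    (s := univ) (t := univ) (fun σ _ => mem_univ _)
  rw [Finset.card_univ, Fintype.card_perm, Fintype.card_fin] at h
  rw [h, Finset.sum_congr rfl (fun i _ => single_fiber_eq N j i j), Finset.sum_const,
    Finset.card_univ, Fintype.card_fin, smul_eq_mul, mul_comm]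

lemma maps_to_offDiag (N : ℕ) (j j' : Fin N) (hjj' : j ≠ j') (σ : Equiv.Perm (Fin N)) :
    (σ j, σ j') ∈ (univ : Finset (Fin N)).offDiag := by
  simp only [Finset.mem_offDiag, mem_univ, true_and]
  exact fun h => hjj' (σ.injective h)

lemma sum_pair (N : ℕ) (j j' : Fin N) (hjj' : j ≠ j') (a : Fin N → ℝ) :
    ∑ σ : Equiv.Perm (Fin N), a (σ j) * a (σ j')
      = ((univ.filter (fun σ : Equiv.Perm (Fin N) => σ j = j ∧ σ j' = j')).card : ℝ)
        * ∑ p ∈ (univ : Finset (Fin N)).offDiag, a p.1 * a p.2 := by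
  rw [← Finset.sum_fiberwise_of_maps_to (g := fun σ : Equiv.Perm (Fin N) => (σ j, σ j'))
    (fun σ _ => maps_to_offDiag N j j' hjj' σ) (fun σ => a (σ j) * a (σ j'))]
  rw [Finset.mul_sum]
  apply Finset.sum_congr rfl
  intro p hp
  have hne : p.1 ≠ p.2 := (Finset.mem_offDiag.mp hp).2.2
  have : ∀ σ ∈ univ.filter (fun σ : Equiv.Perm (Fin N) => (σ j, σ j') = p),
      a (σ j) * a (σ j') = a p.1 * a p.2 := by
    intro σ hσ
    simp only [mem_filter, mem_univ, true_and, Prod.ext_iff] at hσ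
    rw [hσ.1, hσ.2]
  rw [Finset.sum_congr rfl this, Finset.sum_const, nsmul_eq_mul]
  congr 2
  have heq : (univ.filter (fun σ : Equiv.Perm (Fin N) => (σ j, σ j') = p))
      = (univ.filter (fun σ : Equiv.Perm (Fin N) => σ j = p.1 ∧ σ j' = p.2)) := by
    apply Finset.filter_congr; intro σ _; simp [Prod.ext_iff]
  rw [heq, pair_fiber_eq N j j' p.1 p.2 j j' hne hjj']

lemma card_pair (N : ℕ) (j j' : Fin N) (hjj' : j ≠ j') :
    (univ.filter (fun σ : Equiv.Perm (Fin N) => σ j = j ∧ σ j' = j')).card * (N * N - N)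
      = N.factorial := by
  have h := Finset.card_eq_sum_card_fiberwise
    (f := fun σ : Equiv.Perm (Fin N) => (σ j, σ j'))
    (s := univ) (t := (univ : Finset (Fin N)).offDiag)
    (fun σ _ => maps_to_offDiag N j j' hjj' σ)
  rw [Finset.card_univ, Fintype.card_perm, Fintype.card_fin] at h
  have h2 : ∀ p ∈ (univ : Finset (Fin N)).offDiag,
      (univ.filter (fun σ : Equiv.Perm (Fin N) => (σ j, σ j') = p)).card
        = (univ.filter (fun σ : Equiv.Perm (Fin N) => σ j = j ∧ σ j' = j')).card := by
    intro p hp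
    have hne : p.1 ≠ p.2 := (Finset.mem_offDiag.mp hp).2.2
    have heq : (univ.filter (fun σ : Equiv.Perm (Fin N) => (σ j, σ j') = p))
        = (univ.filter (fun σ : Equiv.Perm (Fin N) => σ j = p.1 ∧ σ j' = p.2)) := by
      apply Finset.filter_congr; intro σ _; simp [Prod.ext_iff]
    rw [heq]
    exact pair_fiber_eq N j j' p.1 p.2 j j' hne hjj'
  rw [h, Finset.sum_congr rfl h2, Finset.sum_const, smul_eq_mul, Finset.offDiag_card,
    Finset.card_univ, Fintype.card_fin, mul_comm]

lemma offDiag_sum (N : ℕ) (a : Fin N → ℝ) :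
    ∑ p ∈ (univ : Finset (Fin N)).offDiag, a p.1 * a p.2
      = (∑ i, a i) ^ 2 - ∑ i, (a i) ^ 2 := by
  have h : ∑ p ∈ (univ : Finset (Fin N)) ×ˢ univ, a p.1 * a p.2
      = ∑ p ∈ (univ : Finset (Fin N)).diag, a p.1 * a p.2
        + ∑ p ∈ (univ : Finset (Fin N)).offDiag, a p.1 * a p.2 := by
    rw [← Finset.sum_union (Finset.disjoint_diag_offDiag _), Finset.diag_union_offDiag]
  have h1 : ∑ p ∈ (univ : Finset (Fin N)) ×ˢ univ, a p.1 * a p.2 = (∑ i, a i) ^ 2 := by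
    rw [Finset.sum_product, sq, Finset.sum_mul_sum]
  have h2 : ∑ p ∈ (univ : Finset (Fin N)).diag, a p.1 * a p.2 = ∑ i, (a i) ^ 2 := by
    rw [Finset.sum_diag]
    exact Finset.sum_congr rfl (fun i _ => (sq (a i)).symm)
  linarith

lemma permCov_eq (N : ℕ) (X Y : Equiv.Perm (Fin N) → ℝ) :
    permCov N X Y = permE N (fun σ => X σ * Y σ) - permE N X * permE N Y := by
  have hn : (0:ℝ) < (Fintype.card (Equiv.Perm (Fin N)) : ℝ) := by
    exact_mod_cast Fintype.card_pos
  set n : ℝ := (Fintype.card (Equiv.Perm (Fin N)) : ℝ) with hndef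
  have hne : n ≠ 0 := ne_of_gt hn
  unfold permCov permE
  have hexp : ∑ σ : Equiv.Perm (Fin N),
      (X σ - (∑ σ, X σ) / n) * (Y σ - (∑ σ, Y σ) / n)
      = (∑ σ : Equiv.Perm (Fin N), X σ * Y σ)
        - (∑ σ, X σ) * (∑ σ, Y σ) / n := by
    have hcard : ∑ _σ : Equiv.Perm (Fin N), (1:ℝ) = n := by
      rw [Finset.sum_const, Finset.card_univ, nsmul_eq_mul, mul_one]
    simp only [sub_mul, mul_sub, Finset.sum_sub_distrib]
    rw [← Finset.sum_mul, ← Finset.mul_sum]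
    have : ∑ _σ : Equiv.Perm (Fin N), (∑ σ, X σ) / n * ((∑ σ, Y σ) / n)
        = n * ((∑ σ, X σ) / n * ((∑ σ, Y σ) / n)) := by
      rw [Finset.sum_const, Finset.card_univ, nsmul_eq_mul]
    rw [this]
    field_simp
    ring
  rw [hexp]
  rw [← hndef]
  field_simp

lemma E_single (N : ℕ) (hN : 0 < N) (j : Fin N) (a : Fin N → ℝ) :
    permE N (fun σ => a (σ j)) = (∑ i, a i) / N := by
  unfold permE
  rw [sum_single N j a, Fintype.card_perm, Fintype.card_fin]
  have hc := card_single N j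
  have hc0 : (univ.filter (fun σ : Equiv.Perm (Fin N) => σ j = j)).card ≠ 0 := by
    intro h; rw [h, zero_mul] at hc; first | exact Nat.factorial_ne_zero N hc.symm | exact Nat.factorial_ne_zero N hc
  have : (N.factorial : ℝ)
      = ((univ.filter (fun σ : Equiv.Perm (Fin N) => σ j = j)).card : ℝ) * N := by
    exact_mod_cast hc.symm
  have hc0' : (((univ.filter (fun σ : Equiv.Perm (Fin N) => σ j = j)).card : ℝ)) ≠ 0 := by
    exact_mod_cast hc0
  have hN0 : (N:ℝ) ≠ 0 := by positivity
  rw [this]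
  field_simp

lemma E_pair (N : ℕ) (hN : 2 ≤ N) (j j' : Fin N) (hjj' : j ≠ j') (a : Fin N → ℝ) :
    permE N (fun σ => a (σ j) * a (σ j'))
      = ((∑ i, a i) ^ 2 - ∑ i, (a i) ^ 2) / ((N : ℝ) * ((N : ℝ) - 1)) := by
  unfold permE
  rw [sum_pair N j j' hjj' a, offDiag_sum, Fintype.card_perm, Fintype.card_fin]
  have hc := card_pair N j j' hjj'
  have hc0 : (univ.filter (fun σ : Equiv.Perm (Fin N) => σ j = j ∧ σ j' = j')).card ≠ 0 := by
    intro h; rw [h, zero_mul] at hc; first | exact Nat.factorial_ne_zero N hc.symm | exact Nat.factorial_ne_zero N hc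
  have hNN : ((N * N - N : ℕ) : ℝ) = (N : ℝ) * ((N : ℝ) - 1) := by
    rw [Nat.cast_sub (Nat.le_mul_of_pos_left N (by omega))]
    push_cast; ring
  have : (N.factorial : ℝ)
      = ((univ.filter (fun σ : Equiv.Perm (Fin N) => σ j = j ∧ σ j' = j')).card : ℝ)
        * ((N : ℝ) * ((N : ℝ) - 1)) := by
    rw [← hNN]; exact_mod_cast hc.symm
  have hc0' : (((univ.filter (fun σ : Equiv.Perm (Fin N) => σ j = j ∧ σ j' = j')).card : ℝ)) ≠ 0 := by
    exact_mod_cast hc0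
  have hN0 : (N:ℝ) ≠ 0 := by positivity
  have hN1 : (N:ℝ) - 1 ≠ 0 := by
    have : (2:ℝ) ≤ N := by exact_mod_cast hN
    linarith
  rw [this]
  field_simp

section Blocks
variable {m N : ℕ} (t : Fin m → ℕ) (c : Fin m → ℕ)

lemma c_succ (hc : ∀ g, c g = ∑ g' ∈ Finset.univ.filter (fun g' => g' < g), t g')
    (g : Fin m) (h : (g : ℕ) + 1 < m) :
    c ⟨(g : ℕ) + 1, h⟩ = c g + t g := by
  rw [hc, hc]
  have hins : Finset.univ.filter (fun g' : Fin m => g' < (⟨(g : ℕ) + 1, h⟩ : Fin m))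
      = insert g (Finset.univ.filter (fun g' : Fin m => g' < g)) := by
    ext g'
    simp only [mem_filter, mem_univ, true_and, mem_insert, Fin.lt_def]
    constructor
    · intro hg'
      rcases eq_or_ne (g' : ℕ) (g : ℕ) with h1 | h1
      · exact Or.inl (Fin.ext h1)
      · exact Or.inr (by omega)
    · rintro (rfl | hg') <;> omega
  rw [hins, Finset.sum_insert (by simp), add_comm]

lemma c_add_t_le (hc : ∀ g, c g = ∑ g' ∈ Finset.univ.filter (fun g' => g' < g), t g')
    {g g' : Fin m} (hgg' : g < g') : c g + t g ≤ c g' := by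
  rw [hc, hc]
  have : insert g (Finset.univ.filter (fun g'' : Fin m => g'' < g))
      ⊆ Finset.univ.filter (fun g'' : Fin m => g'' < g') := by
    intro x hx
    simp only [mem_insert, mem_filter, mem_univ, true_and] at hx ⊢
    rcases hx with rfl | hx
    · exact hgg'
    · exact lt_trans hx hgg'
  calc ∑ g'' ∈ Finset.univ.filter (fun g'' : Fin m => g'' < g), t g'' + t g
      = ∑ g'' ∈ insert g (Finset.univ.filter (fun g'' : Fin m => g'' < g)), t g'' := by
        rw [Finset.sum_insert (by simp), add_comm]
    _ ≤ _ := Finset.sum_le_sum_of_subset this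

lemma c_add_t_le_N (hsum : ∑ g, t g = N)
    (hc : ∀ g, c g = ∑ g' ∈ Finset.univ.filter (fun g' => g' < g), t g')
    (g : Fin m) : c g + t g ≤ N := by
  rw [hc, ← hsum]
  calc ∑ g'' ∈ Finset.univ.filter (fun g'' : Fin m => g'' < g), t g'' + t g
      = ∑ g'' ∈ insert g (Finset.univ.filter (fun g'' : Fin m => g'' < g)), t g'' := by
        rw [Finset.sum_insert (by simp), add_comm]
    _ ≤ _ := Finset.sum_le_sum_of_subset (Finset.subset_univ _)

lemma c_last (hsum : ∑ g, t g = N)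
    (hc : ∀ g, c g = ∑ g' ∈ Finset.univ.filter (fun g' => g' < g), t g')
    (g : Fin m) (h : (g : ℕ) + 1 = m) : c g + t g = N := by
  rw [hc, ← hsum]
  rw [add_comm, ← Finset.sum_insert (a := g)
    (s := Finset.univ.filter (fun g'' : Fin m => g'' < g)) (by simp)]
  congr 1
  ext g'
  simp only [mem_insert, mem_filter, mem_univ, true_and, Fin.lt_def]
  constructor
  · intro _; trivial
  · intro _
    rcases eq_or_ne (g' : ℕ) (g : ℕ) with h1 | h1
    · exact Or.inl (Fin.ext h1)
    · exact Or.inr (by omega)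
  
lemma cover (hN : 0 < N) (hsum : ∑ g, t g = N)
    (hc : ∀ g, c g = ∑ g' ∈ Finset.univ.filter (fun g' => g' < g), t g')
    (n : ℕ) (hn : n < N) : ∃ g : Fin m, c g ≤ n ∧ n < c g + t g := by
  have hm : 0 < m := by
    by_contra h
    push_neg at h
    interval_cases m
    simp at hsum; omega
  set s : Finset (Fin m) := Finset.univ.filter (fun g => c g ≤ n) with hs
  have hne : s.Nonempty := by
    refine ⟨⟨0, hm⟩, ?_⟩
    simp only [hs, mem_filter, mem_univ, true_and, hc]
    have : Finset.univ.filter (fun g' : Fin m => g' < (⟨0, hm⟩ : Fin m)) = ∅ := by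
      ext g'; simp [Fin.lt_def]
    rw [this]; simp
  set g := s.max' hne with hg
  have hg1 : c g ≤ n := by
    have := s.max'_mem hne
    simp only [hs, mem_filter, mem_univ, true_and] at this
    exact this
  refine ⟨g, hg1, ?_⟩
  by_contra hcon
  push_neg at hcon
  rcases lt_or_eq_of_le (Nat.succ_le_of_lt g.isLt) with h | h
  · have h' : (g : ℕ) + 1 < m := h
    have hc1 : c ⟨(g : ℕ) + 1, h'⟩ ≤ n := by rw [c_succ t c hc g h']; exact hcon
    have hmem : (⟨(g : ℕ) + 1, h'⟩ : Fin m) ∈ s := by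
      simp only [hs, mem_filter, mem_univ, true_and]; exact hc1
    have := s.le_max' _ hmem
    rw [← hg] at this
    simp only [Fin.le_def] at this
    omega
  · have := c_last t c hsum hc g h
    omega

end Blocks

lemma sum_range_cast (n : ℕ) : ∑ k ∈ Finset.range n, (k : ℝ) = n * (n - 1) / 2 := by
  induction n with
  | zero => simp
  | succ n ih => rw [Finset.sum_range_succ, ih]; push_cast; ring

lemma sum_range_sq_cast (n : ℕ) :
    ∑ k ∈ Finset.range n, (k : ℝ) ^ 2 = n * (n - 1) * (2 * n - 1) / 6 := by
  induction n with
  | zero => simp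
  | succ n ih => rw [Finset.sum_range_succ, ih]; push_cast; ring

lemma block_rank_sum (cg tg : ℕ) :
    ∑ n ∈ Finset.Ico cg (cg + tg), ((n : ℝ) + 1)
      = (tg : ℝ) * ((cg : ℝ) + ((tg : ℝ) + 1) / 2) := by
  rw [Finset.sum_Ico_eq_sum_range]
  simp only [add_tsub_cancel_left]
  have : ∀ k ∈ Finset.range tg, ((cg + k : ℕ) : ℝ) + 1 = ((cg : ℝ) + 1) + (k : ℝ) := by
    intro k _; push_cast; ring
  rw [Finset.sum_congr rfl this, Finset.sum_add_distrib, Finset.sum_const, sum_range_cast,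
    Finset.card_range, nsmul_eq_mul]
  rcases Nat.eq_zero_or_pos tg with h | h
  · simp [h]
  · have : (1:ℝ) ≤ (tg:ℝ) := by exact_mod_cast h
    ring

lemma block_rank_sq_sum (cg tg : ℕ) :
    ∑ n ∈ Finset.Ico cg (cg + tg), ((n : ℝ) + 1) ^ 2
      = (tg : ℝ) * ((cg : ℝ) + ((tg : ℝ) + 1) / 2) ^ 2 + ((tg : ℝ) ^ 3 - (tg : ℝ)) / 12 := by
  rw [Finset.sum_Ico_eq_sum_range]
  simp only [add_tsub_cancel_left]
  have : ∀ k ∈ Finset.range tg, (((cg + k : ℕ) : ℝ) + 1) ^ 2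
      = ((cg : ℝ) + 1) ^ 2 + 2 * ((cg : ℝ) + 1) * (k : ℝ) + (k : ℝ) ^ 2 := by
    intro k _; push_cast; ring
  rw [Finset.sum_congr rfl this, Finset.sum_add_distrib, Finset.sum_add_distrib,
    Finset.sum_const, ← Finset.mul_sum, sum_range_cast, sum_range_sq_cast,
    Finset.card_range, nsmul_eq_mul]
  rcases Nat.eq_zero_or_pos tg with h | h
  · simp [h]
  · have : (1:ℝ) ≤ (tg:ℝ) := by exact_mod_cast h
    ring

lemma range_eq_biUnion {m N : ℕ} (t : Fin m → ℕ) (c : Fin m → ℕ) (hN : 0 < N)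
    (hsum : ∑ g, t g = N)
    (hc : ∀ g, c g = ∑ g' ∈ Finset.univ.filter (fun g' => g' < g), t g') (f : ℕ → ℝ) :
    ∑ n ∈ Finset.range N, f n = ∑ g : Fin m, ∑ n ∈ Finset.Ico (c g) (c g + t g), f n := by
  have hdisj : ((Finset.univ : Finset (Fin m)) : Set (Fin m)).PairwiseDisjoint
      (fun g => Finset.Ico (c g) (c g + t g)) := by
    intro g _ g' _ hgg'
    have key : ∀ x y : Fin m, x < y →
        Disjoint (Finset.Ico (c x) (c x + t x)) (Finset.Ico (c y) (c y + t y)) := by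
      intro x y hxy
      have := c_add_t_le t c hc hxy
      rw [Finset.disjoint_left]
      intro n hn hn'
      rw [Finset.mem_Ico] at hn hn'
      omega
    rcases lt_or_gt_of_ne hgg' with h | h
    · exact key _ _ h
    · exact (key _ _ h).symm
  have hun : Finset.range N
      = (Finset.univ : Finset (Fin m)).biUnion (fun g => Finset.Ico (c g) (c g + t g)) := by
    ext n
    simp only [Finset.mem_range, Finset.mem_biUnion, mem_univ, true_and, Finset.mem_Ico]
    constructor
    · intro hn
      obtain ⟨g, h1, h2⟩ := cover t c hN hsum hc n hn
      exact ⟨g, h1, h2⟩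
    · rintro ⟨g, _, h2⟩
      exact lt_of_lt_of_le h2 (c_add_t_le_N t c hsum hc g)
  rw [hun, Finset.sum_biUnion hdisj]

lemma block_sum {m N : ℕ} (t : Fin m → ℕ) (c : Fin m → ℕ) (hN : 0 < N)
    (hsum : ∑ g, t g = N)
    (hc : ∀ g, c g = ∑ g' ∈ Finset.univ.filter (fun g' => g' < g), t g')
    (a : Fin N → ℝ)
    (ha : ∀ (g : Fin m) (j : Fin N),
      c g ≤ (j : ℕ) → (j : ℕ) < c g + t g → a j = (c g : ℝ) + ((t g : ℝ) + 1) / 2)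
    (F : ℝ → ℝ) :
    ∑ i : Fin N, F (a i) = ∑ g : Fin m, (t g : ℝ) * F ((c g : ℝ) + ((t g : ℝ) + 1) / 2) := by
  set f : ℕ → ℝ := fun n => if h : n < N then F (a ⟨n, h⟩) else 0 with hf
  have h1 : ∑ i : Fin N, F (a i) = ∑ n ∈ Finset.range N, f n := by
    rw [← Fin.sum_univ_eq_sum_range (fun n => f n) N]
    apply Finset.sum_congr rfl
    intro i _
    simp only [hf, i.isLt, dif_pos, Fin.eta]
  rw [h1, range_eq_biUnion t c hN hsum hc f]
  apply Finset.sum_congr rfl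
  intro g _
  have hval : ∀ n ∈ Finset.Ico (c g) (c g + t g),
      f n = F ((c g : ℝ) + ((t g : ℝ) + 1) / 2) := by
    intro n hn
    rw [Finset.mem_Ico] at hn
    have hnN : n < N := lt_of_lt_of_le hn.2 (c_add_t_le_N t c hsum hc g)
    simp only [hf, hnN, dif_pos]
    rw [ha g ⟨n, hnN⟩ hn.1 hn.2]
  rw [Finset.sum_congr rfl hval, Finset.sum_const, Nat.card_Ico, add_tsub_cancel_left,
    nsmul_eq_mul]

lemma S_val {m N : ℕ} (t : Fin m → ℕ) (c : Fin m → ℕ) (hN : 0 < N)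
    (hsum : ∑ g, t g = N)
    (hc : ∀ g, c g = ∑ g' ∈ Finset.univ.filter (fun g' => g' < g), t g')
    (a : Fin N → ℝ)
    (ha : ∀ (g : Fin m) (j : Fin N),
      c g ≤ (j : ℕ) → (j : ℕ) < c g + t g → a j = (c g : ℝ) + ((t g : ℝ) + 1) / 2) :
    ∑ i, a i = (N : ℝ) * ((N : ℝ) + 1) / 2 := by
  have h1 : ∑ i, a i = ∑ g : Fin m, (t g : ℝ) * ((c g : ℝ) + ((t g : ℝ) + 1) / 2) :=
    block_sum t c hN hsum hc a ha id
  rw [h1, Finset.sum_congr rfl (fun g _ => (block_rank_sum (c g) (t g)).symm),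
    ← range_eq_biUnion t c hN hsum hc (fun n => (n : ℝ) + 1),
    Finset.sum_add_distrib, sum_range_cast, Finset.sum_const, Finset.card_range,
    nsmul_eq_mul, mul_one]
  have : (1:ℝ) ≤ (N:ℝ) := by exact_mod_cast hN
  ring

lemma Q_val {m N : ℕ} (t : Fin m → ℕ) (c : Fin m → ℕ) (hN : 0 < N)
    (hsum : ∑ g, t g = N)
    (hc : ∀ g, c g = ∑ g' ∈ Finset.univ.filter (fun g' => g' < g), t g')
    (a : Fin N → ℝ)
    (ha : ∀ (g : Fin m) (j : Fin N),
      c g ≤ (j : ℕ) → (j : ℕ) < c g + t g → a j = (c g : ℝ) + ((t g : ℝ) + 1) / 2) :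
    ∑ i, (a i) ^ 2 = (N : ℝ) * ((N : ℝ) + 1) * (2 * (N : ℝ) + 1) / 6
      - (∑ g, ((t g : ℝ) ^ 3 - (t g : ℝ))) / 12 := by
  have h1 : ∑ i, (a i) ^ 2
      = ∑ g : Fin m, (t g : ℝ) * ((c g : ℝ) + ((t g : ℝ) + 1) / 2) ^ 2 :=
    block_sum t c hN hsum hc a ha (fun x => x ^ 2)
  have h2 : ∀ g : Fin m, (t g : ℝ) * ((c g : ℝ) + ((t g : ℝ) + 1) / 2) ^ 2
      = (∑ n ∈ Finset.Ico (c g) (c g + t g), ((n : ℝ) + 1) ^ 2)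
        - ((t g : ℝ) ^ 3 - (t g : ℝ)) / 12 := by
    intro g
    rw [block_rank_sq_sum (c g) (t g)]
    ring
  rw [h1, Finset.sum_congr rfl (fun g _ => h2 g), Finset.sum_sub_distrib,
    ← range_eq_biUnion t c hN hsum hc (fun n => ((n : ℝ) + 1) ^ 2),
    ← Finset.sum_div]
  have h3 : ∑ n ∈ Finset.range N, ((n : ℝ) + 1) ^ 2
      = (N : ℝ) * ((N : ℝ) + 1) * (2 * (N : ℝ) + 1) / 6 := by
    have : ∀ n ∈ Finset.range N, ((n : ℝ) + 1) ^ 2 = (n:ℝ)^2 + 2*(n:ℝ) + 1 := by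
      intro n _; ring
    rw [Finset.sum_congr rfl this, Finset.sum_add_distrib, Finset.sum_add_distrib,
      sum_range_sq_cast, ← Finset.mul_sum, sum_range_cast, Finset.sum_const,
      Finset.card_range, nsmul_eq_mul, mul_one]
    have : (1:ℝ) ≤ (N:ℝ) := by exact_mod_cast hN
    ring
  rw [h3]

/-- With `N ≥ 2` observations partitioned into `m` tie blocks of sizes `t g` summing to
`N` and midrank scores `a`, for a uniformly random permutation `σ` and distinct indices
`j ≠ j'`, `Cov(a (σ j), a (σ j')) = −(N+1)/12 + (∑ g, (t g³ − t g))/(12 N (N−1))`. -/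
theorem stmt8 (m N : ℕ) (hN : 2 ≤ N) (t : Fin m → ℕ) (ht : ∀ g, 1 ≤ t g)
    (hsum : ∑ g, t g = N)
    (c : Fin m → ℕ)
    (hc : ∀ g, c g = ∑ g' ∈ Finset.univ.filter (fun g' => g' < g), t g')
    (a : Fin N → ℝ)
    (ha : ∀ (g : Fin m) (j : Fin N),
      c g ≤ (j : ℕ) → (j : ℕ) < c g + t g → a j = (c g : ℝ) + ((t g : ℝ) + 1) / 2)
    (j j' : Fin N) (hjj' : j ≠ j') :
    permCov N (fun σ => a (σ j)) (fun σ => a (σ j'))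
      = -(((N : ℝ) + 1) / 12)
        + (∑ g, ((t g : ℝ) ^ 3 - (t g : ℝ))) / (12 * (N : ℝ) * ((N : ℝ) - 1)) := by
  have hN0 : 0 < N := by omega
  rw [permCov_eq, E_pair N hN j j' hjj' a, E_single N hN0 j a, E_single N hN0 j' a,
    S_val t c hN0 hsum hc a ha, Q_val t c hN0 hsum hc a ha]
  have h1 : (N:ℝ) ≠ 0 := by positivity
  have h2 : (N:ℝ) - 1 ≠ 0 := by
    have : (2:ℝ) ≤ (N:ℝ) := by exact_mod_cast hN
    linarith
  field_simp
  ring
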